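/- Let B ⊆ ℕ^Σ be a finite set of Parikh vectors. If B is not independent, then there exists a semilinear expression e such that (⋃_{b∈B} expr(b))* ≡ e and the dimension of e is strictly smaller than the cardinality of B. -/

import Mathlib

namespace CKAnote

/-- Commutative regular expressions over an alphabet `α`. -/
inductive CRE (α : Type) where
  | zero : CRE α
  | one : CRE α
  | letter : α → CRE α
  | mul : CRE α → CRE α → CRE α
  | union : CRE α → CRE α → CRE α
  | star : CRE α → CRE α

variable {α : Type} [Fintype α] [DecidableEq α]

/-- Semantics of a commutative regular expression as a set of Parikh vectors. -/
def sem : CRE α → Set (α → ℕ)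
  | .zero => ∅
  | .one => {0}
  | .letter a => {Pi.single a 1}
  | .mul e f => {w | ∃ u ∈ sem e, ∃ v ∈ sem f, w = u + v}
  | .union e f => sem e ∪ sem f
  | .star e => ↑(AddSubmonoid.closure (sem e))

/-- Provable equality: the smallest congruence containing the axioms of
commutative Kleene algebra (where `e ≤ f` abbreviates `e ∪ f ≡ f`). -/
inductive CKA : CRE α → CRE α → Prop
  | refl (e : CRE α) : CKA e e
  | symm {e f : CRE α} : CKA e f → CKA f e
  | trans {e f g : CRE α} : CKA e f → CKA f g → CKA e g
  | mul_congr {e e' f f' : CRE α} : CKA e e' → CKA f f' → CKA (e.mul f) (e'.mul f')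
  | union_congr {e e' f f' : CRE α} : CKA e e' → CKA f f' → CKA (e.union f) (e'.union f')
  | star_congr {e e' : CRE α} : CKA e e' → CKA e.star e'.star
  | mul_assoc (e f g : CRE α) : CKA (e.mul (f.mul g)) ((e.mul f).mul g)
  | mul_comm (e f : CRE α) : CKA (e.mul f) (f.mul e)
  | one_mul (e : CRE α) : CKA (CRE.one.mul e) e
  | union_assoc (e f g : CRE α) : CKA (e.union (f.union g)) ((e.union f).union g)
  | union_comm (e f : CRE α) : CKA (e.union f) (f.union e)
  | union_idem (e : CRE α) : CKA (e.union e) e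
  | zero_union (e : CRE α) : CKA (CRE.zero.union e) e
  | zero_mul (e : CRE α) : CKA (CRE.zero.mul e) CRE.zero
  | left_distrib (e f g : CRE α) : CKA (e.mul (f.union g)) ((e.mul f).union (e.mul g))
  | star_unfold (e : CRE α) : CKA ((CRE.one.union (e.mul e.star)).union e.star) e.star
  | star_lfp {e f : CRE α} : CKA ((e.mul f).union f) f → CKA ((e.star.mul f).union f) f

/-- `e ≤ f`, i.e. `e ∪ f ≡ f`. -/
def leq (e f : CRE α) : Prop := CKA (e.union f) f

/-- `e^n`, the `n`-fold product of `e` with itself. -/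
def pow (e : CRE α) : ℕ → CRE α
  | 0 => CRE.one
  | n + 1 => e.mul (pow e n)

/-- `e^{<n}`, i.e. `(e ∪ 1)^(n-1)` for `n > 0` and `0` for `n = 0`. -/
def ltPow (e : CRE α) : ℕ → CRE α
  | 0 => CRE.zero
  | n + 1 => pow (e.union CRE.one) n

/-- Finite union of a list of expressions. -/
def unionList : List (CRE α) → CRE α
  | [] => CRE.zero
  | e :: l => e.union (unionList l)

/-- Finite product of a list of expressions. -/
def prodList : List (CRE α) → CRE α
  | [] => CRE.one
  | e :: l => e.mul (prodList l)

/-- `expr(u)`: the product over `a ∈ α` of `u a` copies of the letter `a`. -/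
noncomputable def exprVec (u : α → ℕ) : CRE α :=
  prodList ((Finset.univ : Finset α).toList.map (fun a => pow (CRE.letter a) (u a)))

/-- The union `⋃_{b ∈ B} expr(b)` for a finite set of Parikh vectors `B`. -/
noncomputable def unionVecs (B : Finset (α → ℕ)) : CRE α :=
  unionList (B.toList.map exprVec)

/-- The linear expression `expr(u) · (⋃_{b ∈ B} expr(b))*`. -/
noncomputable def linExpr (u : α → ℕ) (B : Finset (α → ℕ)) : CRE α :=
  (exprVec u).mul (unionVecs B).star

/-- A finite set of Parikh vectors is independent when every Parikh vector
admits at most one representation as an `ℕ`-linear combination of its elements. -/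
def Independent (B : Finset (α → ℕ)) : Prop :=
  ∀ c d : (α → ℕ) → ℕ, (∑ b ∈ B, c b • b) = (∑ b ∈ B, d b • b) → ∀ b ∈ B, c b = d b

/-- The semilinear expression associated to a list of linear data:
the finite union of the corresponding linear expressions. -/
noncomputable def semiLin (L : List ((α → ℕ) × Finset (α → ℕ))) : CRE α :=
  unionList (L.map (fun p => linExpr p.1 p.2))

/-- The dimension of a semilinear expression: the maximum of the dimensions
of its linear components. -/
def dimSL (L : List ((α → ℕ) × Finset (α → ℕ))) : ℕ :=
  (L.map (fun p => p.2.card)).foldr max 0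

/-- Finitary (star-free) expressions. -/
def NoStar : CRE α → Prop
  | .zero => True
  | .one => True
  | .letter _ => True
  | .mul e f => NoStar e ∧ NoStar f
  | .union e f => NoStar e ∧ NoStar f
  | .star _ => False

/-- Coordinatewise embedding of `ℕ^α` into `ℚ^α`. -/
def toQ (v : α → ℕ) : α → ℚ := fun a => (v a : ℚ)

/-!
If `∑ c b • b = ∑ d b • b` with `c ≠ d`, cancelling the common part makes `c` and `d` have
disjoint supports. Then `B*` is the union of the linear expressions `(j • x) · (B ∖ {x})*` for
`x ∈ B` and `j < c x`: the generator `x` can be dropped because its power `x^(c x)` can always be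
traded for the other side `∑ d b • b` of the relation, which avoids `x`. Proving this inside the
axioms means expanding the stars of the other generators with `c b > 0` one at a time, splitting
each `b*` into its powers below `c b` and `b^(c b) · b*`.
-/

local infix:50 " ≋ " => CKA
local infix:50 " ≼ " => leq

section Algebra

omit [Fintype α] [DecidableEq α]

variable {e f g e' f' q : CRE α}

instance : Trans (CKA (α := α)) (CKA (α := α)) (CKA (α := α)) := ⟨CKA.trans⟩

theorem CKA.leq (h : e ≋ f) : e ≼ f :=
  (CKA.union_congr h (CKA.refl f)).trans (CKA.union_idem f)

theorem leq.refl (e : CRE α) : e ≼ e := CKA.union_idem e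

theorem leq.trans (h₁ : e ≼ f) (h₂ : f ≼ g) : e ≼ g :=
  calc e.union g ≋ e.union (f.union g) := CKA.union_congr (CKA.refl e) h₂.symm
    _ ≋ (e.union f).union g := CKA.union_assoc e f g
    _ ≋ f.union g := CKA.union_congr h₁ (CKA.refl g)
    _ ≋ g := h₂

theorem leq.antisymm (h₁ : e ≼ f) (h₂ : f ≼ e) : e ≋ f :=
  calc e ≋ f.union e := h₂.symm
    _ ≋ e.union f := CKA.union_comm f e
    _ ≋ f := h₁

instance : Trans (leq (α := α)) (leq (α := α)) (leq (α := α)) := ⟨leq.trans⟩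
instance : Trans (CKA (α := α)) (leq (α := α)) (leq (α := α)) := ⟨fun h₁ h₂ => h₁.leq.trans h₂⟩
instance : Trans (leq (α := α)) (CKA (α := α)) (leq (α := α)) := ⟨fun h₁ h₂ => h₁.trans h₂.leq⟩

theorem zero_leq (e : CRE α) : CRE.zero ≼ e := CKA.zero_union e

theorem le_union_left (e f : CRE α) : e ≼ e.union f :=
  calc e.union (e.union f) ≋ (e.union e).union f := CKA.union_assoc _ _ _
    _ ≋ e.union f := CKA.union_congr (CKA.union_idem e) (CKA.refl f)

theorem le_union_right (e f : CRE α) : f ≼ e.union f :=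
  calc f ≼ f.union e := le_union_left f e
    _ ≋ e.union f := CKA.union_comm f e

theorem union_leq (h₁ : e ≼ g) (h₂ : f ≼ g) : e.union f ≼ g :=
  calc (e.union f).union g ≋ e.union (f.union g) := (CKA.union_assoc e f g).symm
    _ ≋ e.union g := CKA.union_congr (CKA.refl e) h₂
    _ ≋ g := h₁

theorem CKA.mul_one (e : CRE α) : e.mul CRE.one ≋ e :=
  (CKA.mul_comm e CRE.one).trans (CKA.one_mul e)

theorem CKA.right_distrib (e f g : CRE α) : (e.union f).mul g ≋ (e.mul g).union (f.mul g) :=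
  calc (e.union f).mul g ≋ g.mul (e.union f) := CKA.mul_comm _ _
    _ ≋ (g.mul e).union (g.mul f) := CKA.left_distrib g e f
    _ ≋ (e.mul g).union (f.mul g) := CKA.union_congr (CKA.mul_comm g e) (CKA.mul_comm g f)

theorem CKA.mul_left_comm (e f g : CRE α) : e.mul (f.mul g) ≋ f.mul (e.mul g) :=
  calc e.mul (f.mul g) ≋ (e.mul f).mul g := CKA.mul_assoc _ _ _
    _ ≋ (f.mul e).mul g := CKA.mul_congr (CKA.mul_comm e f) (CKA.refl g)
    _ ≋ f.mul (e.mul g) := (CKA.mul_assoc _ _ _).symm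

theorem mul_leq_left (h : e ≼ e') (f : CRE α) : e.mul f ≼ e'.mul f :=
  calc (e.mul f).union (e'.mul f) ≋ (e.union e').mul f := (CKA.right_distrib e e' f).symm
    _ ≋ e'.mul f := CKA.mul_congr h (CKA.refl f)

theorem mul_leq_right (e : CRE α) (h : f ≼ f') : e.mul f ≼ e.mul f' :=
  calc (e.mul f).union (e.mul f') ≋ e.mul (f.union f') := (CKA.left_distrib e f f').symm
    _ ≋ e.mul f' := CKA.mul_congr (CKA.refl e) h

theorem mul_leq (h₁ : e ≼ e') (h₂ : f ≼ f') : e.mul f ≼ e'.mul f' :=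
  (mul_leq_left h₁ f).trans (mul_leq_right e' h₂)

theorem one_le_star (e : CRE α) : CRE.one ≼ e.star :=
  (le_union_left _ _).trans (CKA.star_unfold e)

theorem mul_star_le (e : CRE α) : e.mul e.star ≼ e.star :=
  (le_union_right _ _).trans (CKA.star_unfold e)

theorem le_star (e : CRE α) : e ≼ e.star :=
  calc e ≋ e.mul CRE.one := (CKA.mul_one e).symm
    _ ≼ e.mul e.star := mul_leq_right e (one_le_star e)
    _ ≼ e.star := mul_star_le e

theorem star_mul_le (h₁ : e.mul f ≼ f) (h₂ : g ≼ f) : e.star.mul g ≼ f :=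
  calc e.star.mul g ≼ e.star.mul f := mul_leq_right _ h₂
    _ ≼ f := CKA.star_lfp h₁

theorem star_le (h₀ : CRE.one ≼ f) (h₁ : e.mul f ≼ f) : e.star ≼ f :=
  calc e.star ≋ e.star.mul CRE.one := (CKA.mul_one _).symm
    _ ≼ f := star_mul_le h₁ h₀

theorem star_mono (h : e ≼ f) : e.star ≼ f.star :=
  star_le (one_le_star f) ((mul_leq_left h f.star).trans (mul_star_le f))

theorem mul_le_star (he : e ≼ g.star) (hf : f ≼ g.star) : e.mul f ≼ g.star :=
  (mul_leq he hf).trans (star_mul_le (mul_star_le g) (leq.refl _))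

theorem CKA.star_eq_one_union_mul_star (e : CRE α) : e.star ≋ CRE.one.union (e.mul e.star) := by
  refine leq.antisymm (star_le (le_union_left _ _) ?_) (CKA.star_unfold e)
  calc e.mul (CRE.one.union (e.mul e.star))
      ≋ (e.mul CRE.one).union (e.mul (e.mul e.star)) := CKA.left_distrib _ _ _
    _ ≼ CRE.one.union (e.mul e.star) := by
        refine union_leq ?_ ?_
        · calc e.mul CRE.one ≼ e.mul e.star := mul_leq_right e (one_le_star e)
            _ ≼ CRE.one.union (e.mul e.star) := le_union_right _ _
        · calc e.mul (e.mul e.star) ≼ e.mul e.star := mul_leq_right e (mul_star_le e)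
            _ ≼ CRE.one.union (e.mul e.star) := le_union_right _ _

theorem star_union_le (e f : CRE α) : (e.union f).star ≼ e.star.mul f.star := by
  refine star_le ?_ ?_
  · calc CRE.one ≋ CRE.one.mul CRE.one := (CKA.one_mul _).symm
      _ ≼ e.star.mul f.star := mul_leq (one_le_star e) (one_le_star f)
  · refine (CKA.right_distrib _ _ _).leq.trans (union_leq ?_ ?_)
    · calc e.mul (e.star.mul f.star) ≋ (e.mul e.star).mul f.star := CKA.mul_assoc _ _ _
        _ ≼ e.star.mul f.star := mul_leq_left (mul_star_le e) _
    · calc f.mul (e.star.mul f.star) ≋ e.star.mul (f.mul f.star) := CKA.mul_left_comm _ _ _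
        _ ≼ e.star.mul f.star := mul_leq_right _ (mul_star_le f)

theorem pow_le_star (h : e ≼ f.star) : ∀ n, pow e n ≼ f.star
  | 0 => one_le_star f
  | n + 1 => mul_le_star h (pow_le_star h n)

theorem CKA.pow_add (e : CRE α) (m n : ℕ) : pow e (m + n) ≋ (pow e m).mul (pow e n) := by
  induction m with
  | zero => simpa [pow] using (CKA.one_mul (pow e n)).symm
  | succ m ih =>
      rw [Nat.succ_add]
      calc e.mul (pow e (m + n)) ≋ e.mul ((pow e m).mul (pow e n)) := CKA.mul_congr (CKA.refl e) ih
        _ ≋ (e.mul (pow e m)).mul (pow e n) := CKA.mul_assoc _ _ _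

theorem pow_mul_star_mul_le {n : ℕ} (hq : (pow e n).mul q ≼ f)
    (hstar : (pow e (n + 1)).mul (e.star.mul q) ≼ f) : (pow e n).mul (e.star.mul q) ≼ f :=
  calc (pow e n).mul (e.star.mul q)
      ≋ (pow e n).mul ((CRE.one.union (e.mul e.star)).mul q) :=
        CKA.mul_congr (CKA.refl _) (CKA.mul_congr (CKA.star_eq_one_union_mul_star e) (CKA.refl q))
    _ ≋ (pow e n).mul (q.union (e.mul (e.star.mul q))) :=
        CKA.mul_congr (CKA.refl _) ((CKA.right_distrib _ _ _).trans
          (CKA.union_congr (CKA.one_mul q) (CKA.mul_assoc _ _ _).symm))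
    _ ≋ ((pow e n).mul q).union ((pow e (n + 1)).mul (e.star.mul q)) :=
        (CKA.left_distrib _ _ _).trans
          (CKA.union_congr (CKA.refl _) ((CKA.mul_left_comm _ _ _).trans (CKA.mul_assoc _ _ _)))
    _ ≼ f := union_leq hq hstar

theorem star_mul_le_of_pow (n : ℕ) (hsmall : ∀ j < n, (pow e j).mul q ≼ f)
    (hlarge : (pow e n).mul (e.star.mul q) ≼ f) : e.star.mul q ≼ f := by
  induction n with
  | zero => exact (CKA.one_mul _).symm.leq.trans hlarge
  | succ n ih =>
      exact ih (fun j hj => hsmall j (by omega))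
        (pow_mul_star_mul_le (hsmall n (by omega)) hlarge)

theorem mem_le_unionList {l : List (CRE α)} (h : e ∈ l) : e ≼ unionList l := by
  induction l with
  | nil => simp at h
  | cons x l ih =>
      rcases List.mem_cons.1 h with rfl | h
      · exact le_union_left _ _
      · exact (ih h).trans (le_union_right _ _)

theorem unionList_mul_le {l : List (CRE α)} (h : ∀ x ∈ l, x.mul g ≼ f) :
    (unionList l).mul g ≼ f := by
  induction l with
  | nil => exact (CKA.zero_mul g).leq.trans (zero_leq f)
  | cons x l ih =>
      exact (CKA.right_distrib _ _ _).leq.trans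
        (union_leq (h x (by simp)) (ih fun y hy => h y (by simp [hy])))

theorem unionList_le {l : List (CRE α)} (h : ∀ x ∈ l, x ≼ f) : unionList l ≼ f :=
  (CKA.mul_one _).symm.leq.trans
    (unionList_mul_le fun x hx => (CKA.mul_one x).leq.trans (h x hx))

theorem mul_unionList_le {l : List (CRE α)} (h : ∀ x ∈ l, g.mul x ≼ f) :
    g.mul (unionList l) ≼ f :=
  (CKA.mul_comm _ _).leq.trans
    (unionList_mul_le fun x hx => (CKA.mul_comm x g).leq.trans (h x hx))

theorem CKA.prodList_map_congr {β : Type*} {u v : β → CRE α} {l : List β}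
    (h : ∀ a ∈ l, u a ≋ v a) : prodList (l.map u) ≋ prodList (l.map v) := by
  induction l with
  | nil => exact CKA.refl _
  | cons a l ih => exact CKA.mul_congr (h a (by simp)) (ih fun x hx => h x (by simp [hx]))

theorem CKA.prodList_map_one {β : Type*} (l : List β) :
    prodList (l.map fun _ => (CRE.one : CRE α)) ≋ CRE.one := by
  induction l with
  | nil => exact CKA.refl _
  | cons a l ih => exact (CKA.mul_congr (CKA.refl _) ih).trans (CKA.one_mul _)

theorem CKA.prodList_map_mul {β : Type*} {u v : β → CRE α} (l : List β) :
    prodList (l.map fun a => (u a).mul (v a)) ≋ (prodList (l.map u)).mul (prodList (l.map v)) := by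
  induction l with
  | nil => exact (CKA.one_mul _).symm
  | cons a l ih =>
      calc ((u a).mul (v a)).mul (prodList (l.map fun a => (u a).mul (v a)))
          ≋ ((u a).mul (v a)).mul ((prodList (l.map u)).mul (prodList (l.map v))) :=
            CKA.mul_congr (CKA.refl _) ih
        _ ≋ (u a).mul ((v a).mul ((prodList (l.map u)).mul (prodList (l.map v)))) :=
            (CKA.mul_assoc _ _ _).symm
        _ ≋ (u a).mul ((prodList (l.map u)).mul ((v a).mul (prodList (l.map v)))) :=
            CKA.mul_congr (CKA.refl _) (CKA.mul_left_comm _ _ _)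
        _ ≋ ((u a).mul (prodList (l.map u))).mul ((v a).mul (prodList (l.map v))) :=
            CKA.mul_assoc _ _ _

end Algebra

section Vectors

omit [DecidableEq α]

variable {e : CRE α} {F G : Finset (α → ℕ)}

theorem exprVec_zero : exprVec (0 : α → ℕ) ≋ CRE.one :=
  (CKA.prodList_map_congr fun _ _ => CKA.refl CRE.one).trans (CKA.prodList_map_one _)

theorem exprVec_add (u v : α → ℕ) : exprVec (u + v) ≋ (exprVec u).mul (exprVec v) :=
  (CKA.prodList_map_congr
    (v := fun a => (pow (CRE.letter a) (u a)).mul (pow (CRE.letter a) (v a)))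
    fun _ _ => CKA.pow_add _ _ _).trans (CKA.prodList_map_mul _)

theorem exprVec_nsmul (n : ℕ) (u : α → ℕ) : exprVec (n • u) ≋ pow (exprVec u) n := by
  induction n with
  | zero => rw [zero_smul]; exact exprVec_zero
  | succ n ih =>
      rw [succ_nsmul, add_comm]
      exact (exprVec_add u (n • u)).trans (CKA.mul_congr (CKA.refl _) ih)

theorem exprVec_le_unionVecs {b : α → ℕ} (h : b ∈ F) : exprVec b ≼ unionVecs F :=
  mem_le_unionList (List.mem_map_of_mem (Finset.mem_toList.2 h))

theorem unionVecs_mul_le {f g : CRE α} (h : ∀ b ∈ F, (exprVec b).mul g ≼ f) :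
    (unionVecs F).mul g ≼ f :=
  unionList_mul_le fun x hx => by
    obtain ⟨b, hb, rfl⟩ := List.mem_map.1 hx
    exact h b (Finset.mem_toList.1 hb)

theorem unionVecs_le (h : ∀ b ∈ F, exprVec b ≼ e) : unionVecs F ≼ e :=
  unionList_le fun x hx => by
    obtain ⟨b, hb, rfl⟩ := List.mem_map.1 hx
    exact h b (Finset.mem_toList.1 hb)

theorem star_unionVecs_mono (h : F ⊆ G) : (unionVecs F).star ≼ (unionVecs G).star :=
  star_mono (unionVecs_le fun _ hb => exprVec_le_unionVecs (h hb))

theorem star_unionVecs_insert_le (a : α → ℕ) (F : Finset (α → ℕ)) :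
    (unionVecs (insert a F)).star ≼ (exprVec a).star.mul (unionVecs F).star := by
  refine (star_mono (unionVecs_le fun b hb => ?_)).trans (star_union_le _ _)
  rcases Finset.mem_insert.1 hb with rfl | hb
  · exact le_union_left _ _
  · exact (exprVec_le_unionVecs hb).trans (le_union_right _ _)

theorem exprVec_nsmul_le_star {b : α → ℕ} (h : b ∈ F) (n : ℕ) :
    exprVec (n • b) ≼ (unionVecs F).star :=
  (exprVec_nsmul n b).leq.trans (pow_le_star ((exprVec_le_unionVecs h).trans (le_star _)) n)

theorem exprVec_sum_le_star (m : (α → ℕ) → ℕ) (h : ∀ b ∈ F, m b ≠ 0 → b ∈ G) :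
    exprVec (∑ b ∈ F, m b • b) ≼ (unionVecs G).star := by
  refine Finset.sum_induction _ (fun v => exprVec v ≼ (unionVecs G).star)
    (fun u v hu hv => (exprVec_add u v).leq.trans (mul_le_star hu hv))
    (exprVec_zero.leq.trans (one_le_star _)) fun b hb => ?_
  by_cases hm : m b = 0
  · rw [hm, zero_smul]
    exact exprVec_zero.leq.trans (one_le_star _)
  · exact exprVec_nsmul_le_star (h b hb hm) _

theorem exprVec_mul_star_mul_le {a w : α → ℕ} {R g f : CRE α} (n : ℕ)
    (hsmall : ∀ j < n, (exprVec (j • a)).mul ((exprVec w).mul (R.mul g)) ≼ f)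
    (hlarge : (exprVec (n • a + w)).mul (R.mul ((exprVec a).star.mul g)) ≼ f) :
    (exprVec w).mul (((exprVec a).star.mul R).mul g) ≼ f := by
  set E := (exprVec a).star
  set Q := (exprVec w).mul (R.mul g)
  refine ((CKA.mul_congr (CKA.refl _) (CKA.mul_assoc _ _ _).symm).trans
    (CKA.mul_left_comm _ _ _)).leq.trans (star_mul_le_of_pow n (fun j hj =>
      (CKA.mul_congr (exprVec_nsmul j a).symm (CKA.refl Q)).leq.trans (hsmall j hj)) ?_)
  calc (pow (exprVec a) n).mul (E.mul Q)
      ≋ (pow (exprVec a) n).mul ((exprVec w).mul (E.mul (R.mul g))) :=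
        CKA.mul_congr (CKA.refl _) (CKA.mul_left_comm _ _ _)
    _ ≋ (pow (exprVec a) n).mul ((exprVec w).mul (R.mul (E.mul g))) :=
        CKA.mul_congr (CKA.refl _) (CKA.mul_congr (CKA.refl _) (CKA.mul_left_comm _ _ _))
    _ ≋ ((pow (exprVec a) n).mul (exprVec w)).mul (R.mul (E.mul g)) := CKA.mul_assoc _ _ _
    _ ≋ (exprVec (n • a + w)).mul (R.mul (E.mul g)) :=
        CKA.mul_congr ((CKA.mul_congr (exprVec_nsmul _ _).symm (CKA.refl _)).trans
          (exprVec_add _ _).symm) (CKA.refl _)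
    _ ≼ f := hlarge

end Vectors

section Semilinear

omit [DecidableEq α]

variable {e f : CRE α} {L : List ((α → ℕ) × Finset (α → ℕ))}

theorem linExpr_le_semiLin {p : (α → ℕ) × Finset (α → ℕ)} (h : p ∈ L) :
    linExpr p.1 p.2 ≼ semiLin L :=
  mem_le_unionList (List.mem_map_of_mem (f := fun p => linExpr p.1 p.2) h)

theorem semiLin_le (h : ∀ p ∈ L, linExpr p.1 p.2 ≼ e) : semiLin L ≼ e :=
  unionList_le fun x hx => by
    obtain ⟨p, hp, rfl⟩ := List.mem_map.1 hx
    exact h p hp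

theorem mul_semiLin_le (h : ∀ p ∈ L, e.mul (linExpr p.1 p.2) ≼ f) : e.mul (semiLin L) ≼ f :=
  mul_unionList_le fun x hx => by
    obtain ⟨p, hp, rfl⟩ := List.mem_map.1 hx
    exact h p hp

omit [Fintype α] in
theorem dimSL_lt {n : ℕ} (hn : 0 < n) (h : ∀ p ∈ L, p.2.card < n) : dimSL L < n := by
  induction L with
  | nil => exact hn
  | cons p L ih => exact max_lt (h p (by simp)) (ih fun q hq => h q (by simp [hq]))

end Semilinear

section Dependence

omit [DecidableEq α]

omit [Fintype α] in
theorem exists_disjoint_dependence {B : Finset (α → ℕ)} (h : ¬ Independent B) :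
    ∃ c d : (α → ℕ) → ℕ, ∑ b ∈ B, c b • b = ∑ b ∈ B, d b • b ∧
      (∀ b ∈ B, c b = 0 ∨ d b = 0) ∧ ∃ b ∈ B, 0 < c b := by
  simp only [Independent, not_forall] at h
  obtain ⟨c, d, hsum, b, hb, hne⟩ := h
  have hcancel : ∑ x ∈ B, (c x - min (c x) (d x)) • x = ∑ x ∈ B, (d x - min (c x) (d x)) • x := by
    refine add_right_cancel (b := ∑ x ∈ B, min (c x) (d x) • x) ?_
    simp only [← Finset.sum_add_distrib, ← add_smul, Nat.sub_add_cancel (min_le_left _ _),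
      Nat.sub_add_cancel (min_le_right _ _)]
    exact hsum
  rcases lt_or_gt_of_ne hne with hlt | hlt
  · exact ⟨_, _, hcancel.symm, fun x _ => by omega, b, hb, by omega⟩
  · exact ⟨_, _, hcancel, fun x _ => by omega, b, hb, by omega⟩

noncomputable def depComponents (B : Finset (α → ℕ)) (c : (α → ℕ) → ℕ) :
    List ((α → ℕ) × Finset (α → ℕ)) :=
  B.toList.flatMap fun x => (List.range (c x)).map fun j => (j • x, B.erase x)

variable {B : Finset (α → ℕ)} {c d : (α → ℕ) → ℕ}

theorem mem_depComponents {p : (α → ℕ) × Finset (α → ℕ)} :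
    p ∈ depComponents B c ↔ ∃ x ∈ B, ∃ j < c x, p = (j • x, B.erase x) := by
  simp [depComponents, eq_comm]

theorem linExpr_le_semiLin_depComponents {x : α → ℕ} {j : ℕ} (hx : x ∈ B) (hj : j < c x) :
    linExpr (j • x) (B.erase x) ≼ semiLin (depComponents B c) :=
  linExpr_le_semiLin (mem_depComponents.2 ⟨x, hx, j, hj, rfl⟩)

theorem star_erase_le_semiLin_depComponents {x : α → ℕ} (hx : x ∈ B) (hc : 0 < c x) :
    (unionVecs (B.erase x)).star ≼ semiLin (depComponents B c) :=
  calc (unionVecs (B.erase x)).star ≋ linExpr (0 • x) (B.erase x) := by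
        rw [zero_smul]; exact ((CKA.mul_congr exprVec_zero (CKA.refl _)).trans (CKA.one_mul _)).symm
    _ ≼ semiLin (depComponents B c) := linExpr_le_semiLin_depComponents hx hc

theorem semiLin_depComponents_le : semiLin (depComponents B c) ≼ (unionVecs B).star :=
  semiLin_le fun p hp => by
    obtain ⟨x, hx, j, -, rfl⟩ := mem_depComponents.1 hp
    exact mul_le_star (exprVec_nsmul_le_star hx j)
      (star_unionVecs_mono (Finset.erase_subset x B))

theorem dimSL_depComponents_lt (hB : B.Nonempty) : dimSL (depComponents B c) < B.card :=
  dimSL_lt hB.card_pos fun p hp => by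
    obtain ⟨x, hx, j, -, rfl⟩ := mem_depComponents.1 hp
    exact Finset.card_erase_lt_of_mem hx

/- `T` holds the generators whose star is still unexpanded; each expanded `b*` has been moved
into `g`, after contributing its full power `b^(c b)` to the sum over `B \ T`. -/
theorem exprVec_sum_sdiff_mul_le (hsum : ∑ b ∈ B, c b • b = ∑ b ∈ B, d b • b)
    (hdisj : ∀ b ∈ B, c b = 0 ∨ d b = 0) {b₁ : α → ℕ} (hb₁ : b₁ ∈ B) (hc₁ : 0 < c b₁)
    {T : Finset (α → ℕ)} (hTB : T ⊆ B) (hb₁T : b₁ ∉ T) {g : CRE α}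
    (hg : ∀ x ∈ insert b₁ T, g ≼ (unionVecs (B.erase x)).star) :
    (exprVec (∑ b ∈ B \ T, c b • b)).mul ((unionVecs T).star.mul g) ≼
      semiLin (depComponents B c) := by
  induction T using Finset.induction_on generalizing g with
  | empty =>
      have hd₁ : d b₁ = 0 := (hdisj b₁ hb₁).resolve_left hc₁.ne'
      have hsum_le : exprVec (∑ b ∈ B, d b • b) ≼ (unionVecs (B.erase b₁)).star :=
        exprVec_sum_le_star d fun b hb hdb =>
          Finset.mem_erase.2 ⟨by rintro rfl; exact hdb hd₁, hb⟩
      rw [Finset.sdiff_empty, hsum]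
      refine (mul_le_star hsum_le (mul_le_star ?_ (hg b₁ (Finset.mem_insert_self _ _)))).trans
        (star_erase_le_semiLin_depComponents hb₁ hc₁)
      exact star_unionVecs_mono (Finset.empty_subset _)
  | insert a T haT ih =>
      have haB : a ∈ B := hTB (Finset.mem_insert_self a T)
      have hTB' : T ⊆ B := (Finset.subset_insert a T).trans hTB
      have hb₁T' : b₁ ∉ T := fun h => hb₁T (Finset.mem_insert_of_mem h)
      refine (mul_leq_right _ (mul_leq_left (star_unionVecs_insert_le a T) g)).trans
        (exprVec_mul_star_mul_le (c a) (fun j hj => ?_) ?_)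
      · refine (mul_leq_right _ (mul_le_star (exprVec_sum_le_star c fun b hb _ => ?_)
          (mul_le_star ?_ (hg a (by simp))))).trans (linExpr_le_semiLin_depComponents haB hj)
        · obtain ⟨hbB, hbaT⟩ := Finset.mem_sdiff.1 hb
          exact Finset.mem_erase.2 ⟨fun h => hbaT (h ▸ Finset.mem_insert_self a T), hbB⟩
        · exact star_unionVecs_mono fun b hb =>
            Finset.mem_erase.2 ⟨fun h => haT (h ▸ hb), hTB' hb⟩
      · rw [← Finset.sum_insert (f := fun b => c b • b)
          (Finset.notMem_sdiff_of_mem_right (Finset.mem_insert_self a T)),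
          Finset.sdiff_insert_insert_of_mem_of_notMem haB haT]
        refine ih hTB' hb₁T' fun x hx => mul_le_star (star_mono (exprVec_le_unionVecs
          (Finset.mem_erase.2 ⟨?_, haB⟩))) (hg x ?_)
        · rintro rfl
          rcases Finset.mem_insert.1 hx with h | h
          exacts [hb₁T (h ▸ Finset.mem_insert_self a T), haT h]
        · rcases Finset.mem_insert.1 hx with rfl | h
          exacts [Finset.mem_insert_self _ _, Finset.mem_insert_of_mem (Finset.mem_insert_of_mem h)]

theorem nsmul_mul_star_erase_le (hsum : ∑ b ∈ B, c b • b = ∑ b ∈ B, d b • b)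
    (hdisj : ∀ b ∈ B, c b = 0 ∨ d b = 0) {x : α → ℕ} (hx : x ∈ B) (hc : 0 < c x) :
    (exprVec (c x • x)).mul (unionVecs (B.erase x)).star ≼ semiLin (depComponents B c) := by
  have h := exprVec_sum_sdiff_mul_le hsum hdisj hx hc (Finset.erase_subset x B)
    (Finset.notMem_erase x B) (g := CRE.one) fun _ _ => one_le_star _
  rw [Finset.sdiff_erase_self hx, Finset.sum_singleton] at h
  exact (CKA.mul_congr (CKA.refl _) (CKA.mul_one _)).symm.leq.trans h

theorem star_le_semiLin_depComponents (hsum : ∑ b ∈ B, c b • b = ∑ b ∈ B, d b • b)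
    (hdisj : ∀ b ∈ B, c b = 0 ∨ d b = 0) {b₀ : α → ℕ} (hb₀ : b₀ ∈ B) (hc₀ : 0 < c b₀) :
    (unionVecs B).star ≼ semiLin (depComponents B c) := by
  refine star_le ((one_le_star _).trans (star_erase_le_semiLin_depComponents hb₀ hc₀))
    (unionVecs_mul_le fun b hb => mul_semiLin_le fun p hp => ?_)
  obtain ⟨x, hx, j, hj, rfl⟩ := mem_depComponents.1 hp
  by_cases hbx : b = x
  · subst hbx
    have hstep :
        (exprVec b).mul (linExpr (j • b) (B.erase b)) ≋ linExpr ((j + 1) • b) (B.erase b) :=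
      (CKA.mul_assoc _ _ _).trans (CKA.mul_congr
        ((exprVec_add _ _).symm.trans (by rw [← succ_nsmul']; exact CKA.refl _)) (CKA.refl _))
    refine hstep.leq.trans ?_
    obtain hlt | heq : j + 1 < c b ∨ j + 1 = c b := by omega
    · exact linExpr_le_semiLin_depComponents hx hlt
    · rw [heq]
      exact nsmul_mul_star_erase_le hsum hdisj hx (by omega)
  · calc (exprVec b).mul (linExpr (j • x) (B.erase x))
        ≋ (exprVec (j • x)).mul ((exprVec b).mul (unionVecs (B.erase x)).star) :=
          CKA.mul_left_comm _ _ _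
      _ ≼ linExpr (j • x) (B.erase x) := mul_leq_right _ (mul_le_star
          ((exprVec_le_unionVecs (Finset.mem_erase.2 ⟨hbx, hb⟩)).trans (le_star _)) (leq.refl _))
      _ ≼ semiLin (depComponents B c) := linExpr_le_semiLin_depComponents hx hj

end Dependence

/-- If `B` is not independent, then `(⋃_{b∈B} expr(b))*` is provably equal to a
semilinear expression of dimension strictly smaller than `|B|`. -/
theorem dep_inf_dim (B : Finset (α → ℕ)) (h : ¬ Independent B) :
    ∃ L : List ((α → ℕ) × Finset (α → ℕ)),
      CKA (unionVecs B).star (semiLin L) ∧ dimSL L < B.card := by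
  obtain ⟨c, d, hsum, hdisj, b₀, hb₀, hc₀⟩ := exists_disjoint_dependence h
  exact ⟨depComponents B c,
    leq.antisymm (star_le_semiLin_depComponents hsum hdisj hb₀ hc₀) semiLin_depComponents_le,
    dimSL_depComponents_lt ⟨b₀, hb₀⟩⟩

end CKAnote
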